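/- For every x ∈ ℝ, the sequence (1/n) log ℙ(X̄ₙ ≥ x) converges in [-∞, 0] to s(x) = sup_{n≥1} (1/n) log ℙ(X̄ₙ ≥ x). -/

import Mathlib

open MeasureTheory ProbabilityTheory Filter Topology

/-- Empirical mean of the first `n` variables. -/
noncomputable def empMean {Ω : Type*} (X : ℕ → Ω → ℝ) (n : ℕ) (ω : Ω) : ℝ :=
  (∑ i ∈ Finset.range n, X i ω) / n

/-- The entropy `s(x) = sup_{n ≥ 1} (1/n) log ℙ(X̄ₙ ≥ x)`, with values in `[-∞, 0]`. -/
noncomputable def entropy {Ω : Type*} [MeasurableSpace Ω] (μ : Measure Ω)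
    (X : ℕ → Ω → ℝ) (x : ℝ) : EReal :=
  ⨆ n : ℕ, ⨆ _ : 1 ≤ n, (((n : ℝ)⁻¹ : ℝ) : EReal) *
    ENNReal.log (μ {ω | x ≤ empMean X n ω})

/-- The pressure `p(λ) = log 𝔼(e^{λ X₁})`, with values in `(-∞, ∞]`. -/
noncomputable def pressure {Ω : Type*} [MeasurableSpace Ω] (μ : Measure Ω)
    (X : ℕ → Ω → ℝ) (l : ℝ) : EReal :=
  ENNReal.log (∫⁻ ω, ENNReal.ofReal (Real.exp (l * X 0 ω)) ∂μ)

/-!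
The event `{X̄ₘ₊ₙ ≥ x}` contains the intersection of `{X̄ₘ ≥ x}` with the event that the block
`Xₘ, …, Xₘ₊ₙ₋₁` has mean at least `x`; that block is independent of the first `m` variables and
distributed like `X₀, …, Xₙ₋₁`. Hence `qₙ = ℙ(X̄ₙ ≥ x)` is supermultiplicative, `-log qₙ` is
subadditive, and Fekete's lemma gives convergence of `(1/n) log qₙ` to its supremum. If
`ℙ(X₀ ≥ x) = 0` then every `qₙ` vanishes (some `Xᵢ` must be `≥ x`), and both sides are `-∞`.
-/

open Finset
open scoped ENNReal

noncomputable def logRate (q : ℕ → ℝ≥0∞) (n : ℕ) : EReal :=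
  (((n : ℝ)⁻¹ : ℝ) : EReal) * ENNReal.log (q n)

lemma neg_log_toReal_nonneg {a : ℝ≥0∞} (ha : a ≤ 1) : 0 ≤ -Real.log a.toReal :=
  neg_nonneg.2 (Real.log_nonpos ENNReal.toReal_nonneg
    (ENNReal.toReal_le_of_le_ofReal zero_le_one (by simpa using ha)))

section Fekete

variable {q : ℕ → ℝ≥0∞}

lemma ne_zero_of_supermul (hmul : ∀ m n, q m * q n ≤ q (m + n)) (h1 : q 1 ≠ 0) {n : ℕ}
    (hn : n ≠ 0) : q n ≠ 0 := by
  induction n with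
  | zero => exact absurd rfl hn
  | succ k ih =>
    rcases eq_or_ne k 0 with rfl | hk
    · exact h1
    · exact ne_bot_of_le_ne_bot (mul_ne_zero (ih hk) h1) (hmul k 1)

lemma subadditive_neg_log_toReal (hmul : ∀ m n, q m * q n ≤ q (m + n)) (hle : ∀ n, q n ≤ 1)
    (hpos : ∀ n ≠ 0, q n ≠ 0) : Subadditive fun n => -Real.log (q n).toReal := by
  intro m n
  rcases eq_or_ne m 0 with rfl | hm
  · simpa using neg_log_toReal_nonneg (hle 0)
  rcases eq_or_ne n 0 with rfl | hn
  · simpa using neg_log_toReal_nonneg (hle 0)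
  have hfin : ∀ k, q k ≠ ⊤ := fun k => ne_top_of_le_ne_top ENNReal.one_ne_top (hle k)
  have hposR : ∀ k ≠ 0, 0 < (q k).toReal := fun k hk => ENNReal.toReal_pos (hpos k hk) (hfin k)
  have hlog : Real.log ((q m).toReal * (q n).toReal) ≤ Real.log (q (m + n)).toReal :=
    Real.log_le_log (mul_pos (hposR m hm) (hposR n hn))
      (by simpa using ENNReal.toReal_mono (hfin _) (hmul m n))
  rw [Real.log_mul (hposR m hm).ne' (hposR n hn).ne'] at hlog
  linarith

lemma tendsto_logRate_of_supermul (hmul : ∀ m n, q m * q n ≤ q (m + n))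
    (hle : ∀ n, q n ≤ 1) (h1 : q 1 ≠ 0) :
    Tendsto (logRate q) atTop (𝓝 (⨆ n : ℕ, ⨆ _ : 1 ≤ n, logRate q n)) := by
  have hpos : ∀ n ≠ 0, q n ≠ 0 := fun n => ne_zero_of_supermul hmul h1
  set u : ℕ → ℝ := fun n => -Real.log (q n).toReal
  have hsub : Subadditive u := subadditive_neg_log_toReal hmul hle hpos
  have hbdd : BddBelow (Set.range fun n => u n / n) := ⟨0, by
    rintro _ ⟨n, rfl⟩
    exact div_nonneg (neg_log_toReal_nonneg (hle n)) n.cast_nonneg⟩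
  have hrate : ∀ n : ℕ, n ≠ 0 → logRate q n = ((-(u n / n) : ℝ) : EReal) := by
    intro n hn
    rw [logRate, ENNReal.log_pos_real (hpos n hn) (ne_top_of_le_ne_top ENNReal.one_ne_top (hle n)),
      ← EReal.coe_mul]
    congr 1
    simp only [u]
    ring
  have hlim : Tendsto (fun n : ℕ => ((-(u n / n) : ℝ) : EReal)) atTop
      (𝓝 ((-hsub.lim : ℝ) : EReal)) :=
    EReal.tendsto_coe.2 (hsub.tendsto_lim hbdd).neg
  have hsup : (⨆ n : ℕ, ⨆ _ : 1 ≤ n, logRate q n) = ((-hsub.lim : ℝ) : EReal) := by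
    refine le_antisymm (iSup₂_le fun n hn => ?_) (le_of_tendsto hlim ?_)
    · rw [hrate n (by omega)]
      exact EReal.coe_le_coe_iff.2 (neg_le_neg (hsub.lim_le_div hbdd (by omega)))
    · filter_upwards [eventually_ge_atTop 1] with n hn
      exact le_iSup₂_of_le n hn (hrate n (by omega)).ge
  rw [hsup]
  exact hlim.congr' (by filter_upwards [eventually_ne_atTop 0] with n hn using (hrate n hn).symm)

lemma tendsto_logRate_of_eq_zero (h : ∀ n ≠ 0, q n = 0) :
    Tendsto (logRate q) atTop (𝓝 (⨆ n : ℕ, ⨆ _ : 1 ≤ n, logRate q n)) := by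
  have hbot : ∀ n : ℕ, n ≠ 0 → logRate q n = ⊥ := fun n hn => by
    rw [logRate, h n hn, ENNReal.log_zero]
    exact EReal.coe_mul_bot_of_pos (by positivity)
  rw [iSup₂_eq_bot.2 fun n hn => hbot n (by omega)]
  exact tendsto_const_nhds.congr'
    (by filter_upwards [eventually_ne_atTop 0] with n hn using (hbot n hn).symm)

end Fekete

namespace ProbabilityTheory

variable {Ω E : Type*} [MeasurableSpace Ω] {μ : Measure Ω}
  [AddCommMonoid E] [MeasurableSpace E] [MeasurableAdd₂ E] {X : ℕ → Ω → E}

lemma iIndepFun.indepFun_sum_finset (hindep : iIndepFun X μ) (hmeas : ∀ i, AEMeasurable (X i) μ)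
    {S T : Finset ℕ} (hST : Disjoint S T) :
    IndepFun (fun ω => ∑ i ∈ S, X i ω) (fun ω => ∑ i ∈ T, X i ω) μ := by
  have hsum : ∀ U : Finset ℕ, Measurable fun v : U → E => ∑ i, v i :=
    fun U => Finset.measurable_sum _ fun i _ => measurable_pi_apply i
  convert (hindep.indepFun_finset₀ S T hST hmeas).comp (hsum S) (hsum T) using 1 <;>
    exact funext fun ω => (Finset.sum_coe_sort _ fun i => X i ω).symm

lemma identDistrib_sum_range_add (hindep : iIndepFun X μ)
    (hident : ∀ i, IdentDistrib (X i) (X 0) μ μ) (n m : ℕ) :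
    IdentDistrib (fun ω => ∑ i ∈ range m, X (n + i) ω) (fun ω => ∑ i ∈ range m, X i ω) μ μ := by
  have hshift : IdentDistrib (fun ω i => X (n + i) ω) (fun ω i => X i ω) μ μ :=
    IdentDistrib.pi (fun i => (hident (n + i)).trans (hident i).symm)
      (hindep.precomp (add_right_injective n)) hindep
  exact hshift.comp (Finset.measurable_sum _ fun i _ => measurable_pi_apply i)

end ProbabilityTheory

lemma setOf_le_empMean {Ω : Type*} {X : ℕ → Ω → ℝ} {x : ℝ} {n : ℕ} (hn : n ≠ 0) :
    {ω | x ≤ empMean X n ω} = {ω | x * n ≤ ∑ i ∈ range n, X i ω} := by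
  ext ω
  exact le_div_iff₀ (by positivity : (0 : ℝ) < n)

section EmpiricalMean

variable {Ω : Type*} [MeasurableSpace Ω] {μ : Measure Ω} {X : ℕ → Ω → ℝ}

lemma measure_le_empMean_one (x : ℝ) : μ {ω | x ≤ empMean X 1 ω} = μ {ω | x ≤ X 0 ω} := by
  simp [empMean]

lemma measure_le_sum_range_mul_le (hindep : iIndepFun X μ)
    (hident : ∀ i, IdentDistrib (X i) (X 0) μ μ) (x : ℝ) (m n : ℕ) :
    μ {ω | x * m ≤ ∑ i ∈ range m, X i ω} * μ {ω | x * n ≤ ∑ i ∈ range n, X i ω} ≤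
      μ {ω | x * ↑(m + n) ≤ ∑ i ∈ range (m + n), X i ω} := by
  have hshift : μ {ω | x * n ≤ ∑ i ∈ range n, X (m + i) ω} =
      μ {ω | x * n ≤ ∑ i ∈ range n, X i ω} :=
    (identDistrib_sum_range_add hindep hident m n).measure_mem_eq measurableSet_Ici
  have hind : IndepFun (fun ω => ∑ i ∈ range m, X i ω) (fun ω => ∑ i ∈ range n, X (m + i) ω) μ := by
    simpa only [Finset.sum_map, addLeftEmbedding_apply] using hindep.indepFun_sum_finset
      (fun i => (hident i).aemeasurable_fst)
      (S := range m) (T := (range n).map (addLeftEmbedding m)) (by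
        simp only [Finset.disjoint_left, Finset.mem_range, Finset.mem_map, addLeftEmbedding_apply]
        omega)
  calc _ = μ ({ω | x * m ≤ ∑ i ∈ range m, X i ω} ∩ {ω | x * n ≤ ∑ i ∈ range n, X (m + i) ω}) := by
        rw [← hshift]
        exact (hind.measure_inter_preimage_eq_mul _ _ measurableSet_Ici measurableSet_Ici).symm
    _ ≤ _ := measure_mono fun ω ⟨hm, hn⟩ => by
        simp only [Set.mem_ofPred_eq, Finset.sum_range_add, Nat.cast_add] at hm hn ⊢
        linarith

lemma measure_le_empMean_eq_zero (hident : ∀ i, IdentDistrib (X i) (X 0) μ μ) {x : ℝ}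
    (h0 : μ {ω | x ≤ X 0 ω} = 0) {n : ℕ} (hn : n ≠ 0) : μ {ω | x ≤ empMean X n ω} = 0 := by
  rw [setOf_le_empMean hn]
  refine measure_mono_null (fun ω hω => ?_) ((measure_biUnion_null_iff (range n).countable_toSet).2
    fun i _ => ((hident i).measure_mem_eq measurableSet_Ici).trans h0)
  obtain ⟨i, hi, hxi⟩ := Finset.exists_le_of_sum_le (nonempty_range_iff.2 hn)
    (f := fun _ => x) (g := fun i => X i ω) (by simpa [mul_comm] using hω)
  exact Set.mem_biUnion hi hxi

variable [IsProbabilityMeasure μ]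

lemma measure_le_empMean_mul_le (hindep : iIndepFun X μ)
    (hident : ∀ i, IdentDistrib (X i) (X 0) μ μ) (x : ℝ) (m n : ℕ) :
    μ {ω | x ≤ empMean X m ω} * μ {ω | x ≤ empMean X n ω} ≤ μ {ω | x ≤ empMean X (m + n) ω} := by
  rcases eq_or_ne m 0 with rfl | hm
  · simpa using mul_le_of_le_one_left' (prob_le_one (μ := μ))
  rcases eq_or_ne n 0 with rfl | hn
  · simpa using mul_le_of_le_one_right' (prob_le_one (μ := μ))
  rw [setOf_le_empMean hm, setOf_le_empMean hn, setOf_le_empMean (by omega)]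
  exact measure_le_sum_range_mul_le hindep hident x m n

end EmpiricalMean

theorem convergence_to_entropy_general {Ω : Type*} [MeasurableSpace Ω] (μ : Measure Ω) [IsProbabilityMeasure μ]
    (X : ℕ → Ω → ℝ)
    (hindep : iIndepFun X μ)
    (hident : ∀ i, IdentDistrib (X i) (X 0) μ μ) (x : ℝ) :
    Tendsto (fun n : ℕ => (((n : ℝ)⁻¹ : ℝ) : EReal) *
        ENNReal.log (μ {ω | x ≤ empMean X n ω})) atTop (𝓝 (entropy μ X x)) := by
  by_cases h0 : μ {ω | x ≤ X 0 ω} = 0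
  · exact tendsto_logRate_of_eq_zero fun n hn => measure_le_empMean_eq_zero hident h0 hn
  · exact tendsto_logRate_of_supermul (measure_le_empMean_mul_le hindep hident x)
      (fun _ => prob_le_one) (by rwa [measure_le_empMean_one])

theorem convergence_to_entropy {Ω : Type*} [MeasurableSpace Ω] (μ : Measure Ω) [IsProbabilityMeasure μ]
    (X : ℕ → Ω → ℝ) (hmeas : ∀ i, Measurable (X i))
    (hindep : iIndepFun X μ)
    (hident : ∀ i, IdentDistrib (X i) (X 0) μ μ) (x : ℝ) :
    Tendsto (fun n : ℕ => (((n : ℝ)⁻¹ : ℝ) : EReal) *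
        ENNReal.log (μ {ω | x ≤ empMean X n ω})) atTop (𝓝 (entropy μ X x)) :=
  convergence_to_entropy_general μ X hindep hident x
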